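/- Let g and 𝔨 be Lie algebras over a field, ρ : g → Der(𝔨) an action by derivations, λ ≠ 0, and T : 𝔨 → g a relative Rota–Baxter operator of weight λ. On g × 𝔨 define the semidirect bracket ⁅(x,u),(y,v)⁆ := (⁅x,y⁆_g, ρ(x)v − ρ(y)u + ⁅u,v⁆_𝔨) and T̄(x,u) := (−λx + Tu, 0). Then T̄ is a Rota–Baxter operator of weight λ on g ⋉_ρ 𝔨, and if (σ,τ) is a reflection on (𝔨 →T g, ρ), the map σ̃(x,u) := (σx, τu) is a reflection on the Rota–Baxter Lie algebra (g ⋉_ρ 𝔨, T̄): σ̃ is a Lie algebra automorphism, σ̃⁅σ̃a,b⁆ = ⁅a,σ̃b⁆ for all a,b, σ̃∘σ̃ = id, and σ̃∘T̄∘σ̃ − T̄ + σ̃∘T̄ − T̄∘σ̃ = 0. -/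

import Mathlib

variable {K : Type*} [Field K] {g : Type*} [LieRing g] [LieAlgebra K g]
  {k : Type*} [LieRing k] [LieAlgebra K k]

attribute [local instance 100] LieRing.ofAssociativeRing LieAlgebra.ofAssociativeAlgebra

/-- The semidirect bracket on `g × k`:
`⁅(x,u),(y,v)⁆ = (⁅x,y⁆, ρ(x)v − ρ(y)u + ⁅u,v⁆)`. -/
def sdBr (ρ : g →ₗ⁅K⁆ Module.End K k) (a b : g × k) : g × k :=
  (⁅a.1, b.1⁆, ρ a.1 b.2 - ρ b.1 a.2 + ⁅a.2, b.2⁆)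

/-- `T̄(x,u) := (−lam·x + Tu, 0)`. -/
def Tbar (T : k →ₗ[K] g) (lam : K) (a : g × k) : g × k :=
  (-(lam • a.1) + T a.2, 0)

/-- `σ̃(x,u) := (σx, τu)`. -/
def sigmaT (σ : g ≃ₗ[K] g) (τ : k ≃ₗ[K] k) (a : g × k) : g × k :=
  (σ a.1, τ a.2)

/-- Let `ρ : g → Der(k)` be an action by derivations, `lam ≠ 0` and
`T : k → g` a relative Rota–Baxter operator of weight `lam`.  Then `T̄(x,u) = (−lam x + Tu, 0)`
is a Rota–Baxter operator of weight `lam` on `g ⋉_ρ k`, and a reflection `(σ,τ)` on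
`(k →T g, ρ)` induces a reflection `σ̃(x,u) = (σx, τu)` on `(g ⋉_ρ k, T̄)`. -/
theorem stmt17 (ρ : g →ₗ⁅K⁆ Module.End K k)
    (hder : ∀ (x : g) (u v : k), ρ x ⁅u, v⁆ = ⁅ρ x u, v⁆ + ⁅u, ρ x v⁆)
    (lam : K) (hlam : lam ≠ 0) (T : k →ₗ[K] g)
    (hT : ∀ u v : k, ⁅T u, T v⁆ = T (ρ (T u) v - ρ (T v) u + lam • ⁅u, v⁆))
    (σ : g ≃ₗ[K] g) (τ : k ≃ₗ[K] k)
    (hσbr : ∀ x y : g, σ ⁅x, y⁆ = ⁅σ x, σ y⁆)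
    (hτbr : ∀ u v : k, τ ⁅u, v⁆ = ⁅τ u, τ v⁆)
    (hσinv : ∀ x : g, σ (σ x) = x)
    (hτinv : ∀ u : k, τ (τ u) = u)
    (hcompat : ∀ (x : g) (u : k), τ (ρ x u) = ρ (σ x) (τ u))
    (hrefl : ∀ u : k, σ (T (τ u)) - T u + σ (T u) - T (τ u) = 0) :
    -- `T̄` is a Rota–Baxter operator of weight `lam` on `g ⋉_ρ k`
    (∀ a b : g × k,
      sdBr ρ (Tbar T lam a) (Tbar T lam b) =
        Tbar T lam (sdBr ρ (Tbar T lam a) b + sdBr ρ a (Tbar T lam b) +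
          lam • sdBr ρ a b)) ∧
    -- `σ̃` is a Lie algebra automorphism of `g ⋉_ρ k`
    Function.Bijective (sigmaT σ τ) ∧
    (∀ a b : g × k, sigmaT σ τ (sdBr ρ a b) = sdBr ρ (sigmaT σ τ a) (sigmaT σ τ b)) ∧
    -- `σ̃⁅σ̃a,b⁆ = ⁅a,σ̃b⁆`
    (∀ a b : g × k, sigmaT σ τ (sdBr ρ (sigmaT σ τ a) b) = sdBr ρ a (sigmaT σ τ b)) ∧
    -- `σ̃ ∘ σ̃ = id`
    (∀ a : g × k, sigmaT σ τ (sigmaT σ τ a) = a) ∧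
    -- `σ̃∘T̄∘σ̃ − T̄ + σ̃∘T̄ − T̄∘σ̃ = 0`
    (∀ a : g × k,
      sigmaT σ τ (Tbar T lam (sigmaT σ τ a)) - Tbar T lam a +
        sigmaT σ τ (Tbar T lam a) - Tbar T lam (sigmaT σ τ a) = 0) := by
  refine ⟨?_, ⟨?_, ?_, ?_, ?_, ?_⟩⟩
  · rintro ⟨x, u⟩ ⟨y, v⟩
    have h := hT u v
    refine Prod.ext ?_ ?_
    · simp only [sdBr, Tbar, Prod.fst_add, Prod.snd_add, Prod.smul_fst, Prod.smul_snd,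
        map_zero, map_add, map_sub, map_smul, LinearMap.zero_apply, LinearMap.add_apply,
        LinearMap.sub_apply, LinearMap.smul_apply, lie_zero, zero_lie, add_lie, lie_add,
        neg_lie, lie_neg, smul_lie, lie_smul, smul_add, smul_sub, smul_neg, smul_smul,
        add_zero, zero_add, sub_zero, zero_sub, map_neg, map_smul, map_add, map_neg,
        LinearMap.add_apply, LinearMap.neg_apply, LinearMap.smul_apply, h]
      module
    · simp [sdBr, Tbar]
  · exact Function.bijective_iff_has_inverse.2 ⟨sigmaT σ τ, fun a => Prod.ext (hσinv a.1) (hτinv a.2), fun a => Prod.ext (hσinv a.1) (hτinv a.2)⟩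
  · rintro ⟨x, u⟩ ⟨y, v⟩
    simp [sdBr, sigmaT, hσbr, hτbr, hcompat, map_sub, map_add]
  · rintro ⟨x, u⟩ ⟨y, v⟩
    simp [sdBr, sigmaT, hσbr, hτbr, hcompat, hσinv, hτinv, map_sub, map_add]
  · exact fun a => Prod.ext (hσinv a.1) (hτinv a.2)
  · rintro ⟨x, u⟩
    refine Prod.ext ?_ ?_
    · have h := hrefl u
      simp only [sigmaT, Tbar, Prod.fst_sub, Prod.fst_add, map_add, map_neg, map_smul, hσinv, Prod.fst_zero]
      rw [← sub_eq_zero] at h ⊢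
      linear_combination (norm := module) h
    · simp [sigmaT, Tbar]
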